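/- arXiv:2407.08490 — 3 statements merged into one kernel-verified Lean document; each statement's English description precedes it below -/
import Mathlib

section
/- For every k ≥ 1 there exists K ≥ 1 with the following property. Every strictly increasing homeomorphism φ : ℝ → ℝ which is k-quasi-symmetric admits an extension to ℍ: there exists an orientation-preserving C¹ diffeomorphism F : ℍ → ℍ which is K-quasi-conformal, such that for every x ∈ ℝ, F(z) → φ(x) as z → x with z ∈ ℍ, and |F(z)| → ∞ as |z| → ∞ with z ∈ ℍ. -/
open Complex Set Filter Topology

noncomputable section

/-- The upper half-plane, as a subset of `ℂ`. -/
def UpperHalf : Set ℂ := {z : ℂ | 0 < z.im}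

/-- Inverse hyperbolic cosine. -/
noncomputable def arcosh (x : ℝ) : ℝ := Real.log (x + Real.sqrt (x ^ 2 - 1))

/-- The hyperbolic distance on the upper half-plane,
`d(z,w) = arcosh (1 + |z-w|² / (2 Im z Im w))`. -/
noncomputable def hypDist (z w : ℂ) : ℝ :=
  arcosh (1 + (‖z - w‖) ^ 2 / (2 * z.im * w.im))

/-- The Wirtinger derivative `∂f/∂z = ½(∂f/∂x − i ∂f/∂y)` of `f` on the upper half-plane. -/
noncomputable def wirtZ (f : ℂ → ℂ) (z : ℂ) : ℂ :=
  (1 / 2 : ℂ) * (fderivWithin ℝ f UpperHalf z 1 - Complex.I * fderivWithin ℝ f UpperHalf z Complex.I)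

/-- The Wirtinger derivative `∂f/∂z̄ = ½(∂f/∂x + i ∂f/∂y)` of `f` on the upper half-plane. -/
noncomputable def wirtZbar (f : ℂ → ℂ) (z : ℂ) : ℂ :=
  (1 / 2 : ℂ) * (fderivWithin ℝ f UpperHalf z 1 + Complex.I * fderivWithin ℝ f UpperHalf z Complex.I)

/-- `f` is an orientation-preserving `C¹` diffeomorphism of the upper half-plane onto itself
which is `K`-quasi-conformal: `|∂f/∂z̄| ≤ ((K-1)/(K+1)) |∂f/∂z|`.  Orientation preservation is
expressed by positivity of the Jacobian determinant `|∂f/∂z|² − |∂f/∂z̄|² > 0`. -/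
def IsQCDiffeo (K : ℝ) (f : ℂ → ℂ) : Prop :=
  MapsTo f UpperHalf UpperHalf ∧ InjOn f UpperHalf ∧ SurjOn f UpperHalf UpperHalf ∧
  ContDiffOn ℝ 1 f UpperHalf ∧
  (∀ z ∈ UpperHalf, ‖wirtZbar f z‖ < ‖wirtZ f z‖) ∧
  (∀ z ∈ UpperHalf, ‖wirtZbar f z‖ ≤ ((K - 1) / (K + 1)) * ‖wirtZ f z‖)

/-- `φ : ℝ → ℝ` is a strictly increasing homeomorphism of the real line. -/
def IncrHomeo (φ : ℝ → ℝ) : Prop :=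
  StrictMono φ ∧ Continuous φ ∧ Function.Surjective φ

/-- `φ` is `k`-quasi-symmetric. -/
def QuasiSym (k : ℝ) (φ : ℝ → ℝ) : Prop :=
  ∀ x t : ℝ, 0 < t →
    1 / k ≤ (φ (x + t) - φ x) / (φ x - φ (x - t)) ∧
      (φ (x + t) - φ x) / (φ x - φ (x - t)) ≤ k

/-- `|f z| → ∞` as `|z| → ∞` with `z` in the upper half-plane. -/
def TendsInfty (f : ℂ → ℂ) : Prop :=
  ∀ R : ℝ, 0 < R → ∃ S : ℝ, 0 < S ∧ ∀ z ∈ UpperHalf, S ≤ ‖z‖ → R ≤ ‖f z‖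

/-- The cross-ratio of four real numbers. -/
noncomputable def crossRatio (a b c d : ℝ) : ℝ := ((c - a) * (d - b)) / ((b - a) * (d - c))

/-- The Möbius action of `SL(2,ℝ)` on the (complexified) upper half-plane. -/
noncomputable def moebius (g : Matrix.SpecialLinearGroup (Fin 2) ℝ) (z : ℂ) : ℂ :=
  (((g : Matrix (Fin 2) (Fin 2) ℝ) 0 0 : ℂ) * z + ((g : Matrix (Fin 2) (Fin 2) ℝ) 0 1 : ℂ)) /
  (((g : Matrix (Fin 2) (Fin 2) ℝ) 1 0 : ℂ) * z + ((g : Matrix (Fin 2) (Fin 2) ℝ) 1 1 : ℂ))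

/-- The derivatives of order `p` of `u` are bounded by `M` with respect to the hyperbolic
metric: `(Im z)^p ‖Dᵖu(z)‖ ≤ M` on the upper half-plane. -/
def DerivBound (u : ℂ → ℝ) (p : ℕ) (M : ℝ) : Prop :=
  ∀ z ∈ UpperHalf, (z.im) ^ p * ‖iteratedFDerivWithin ℝ p u UpperHalf z‖ ≤ M

/-- The Euclidean Laplacian `Δu = ∂²u/∂x² + ∂²u/∂y²` of `u` on the upper half-plane. -/
noncomputable def lapl (u : ℂ → ℝ) (z : ℂ) : ℝ :=
  iteratedFDerivWithin ℝ 2 u UpperHalf z ![1, 1] +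
    iteratedFDerivWithin ℝ 2 u UpperHalf z ![Complex.I, Complex.I]

/-- The curvature function `K_u(z) = −e^{−2u(z)} (1 + (Im z)² Δu(z))` of the conformal
metric `e^{2u} h_{−1}` on the upper half-plane. -/
noncomputable def curv (u : ℂ → ℝ) (z : ℂ) : ℝ :=
  -Real.exp (-2 * u z) * (1 + z.im ^ 2 * lapl u z)

/-- Convergence together with all derivatives, uniformly on every compact subset of the
upper half-plane. -/
def ConvAllDerivs (F : ℕ → ℂ → ℝ) (G : ℂ → ℝ) : Prop :=
  ∀ p : ℕ, ∀ S : Set ℂ, S ⊆ UpperHalf → IsCompact S →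
    TendstoUniformlyOn (fun n z => iteratedFDerivWithin ℝ p (F n) UpperHalf z)
      (fun z => iteratedFDerivWithin ℝ p G UpperHalf z) atTop S

/-!
The extension is the Beurling–Ahlfors extension `F(x + iy) = ((1 + i) α + (1 - i) β) / 2`,
where `α` and `β` are the averages of `φ` over `[x, x + y]` and `[x - y, x]`.  Since
`Re F = (α + β) / 2` and `Im F = (α - β) / 2`, and an average of a strictly increasing function
is strictly increasing in both endpoints, `F` is a bijection of `ℍ`; both averages are squeezed
between `φ (x - y)` and `φ (x + y)`, which gives the boundary values.  Writing
`a = φ (x + y) - φ x`, `b = φ x - φ (x - y)`, `P = φ (x + y) - α`, `Q = β - φ (x - y)`, the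
partial derivatives of the averages give `4y ∂F = (1 + i)(a + Q) + (1 - i)(b + P)` and
`4y ∂̄F = (1 + i)(a - Q) + (1 - i)(b - P)`.  Quasi-symmetry makes `a` and `b` comparable and,
splitting each interval at its midpoint, bounds `P` and `Q` below by `a / (2(k + 1))` and
`b / (2(k + 1))`; this bounds the dilatation by `K = 4k(k + 1)`.
-/

namespace BeurlingAhlfors

variable {φ : ℝ → ℝ} {k : ℝ} {z : ℂ}

def primitive (φ : ℝ → ℝ) (x : ℝ) : ℝ := ∫ t in (0 : ℝ)..x, φ t

theorem hasDerivAt_primitive (hc : Continuous φ) (x : ℝ) : HasDerivAt (primitive φ) (φ x) x :=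
  hc.integral_hasStrictDerivAt 0 x |>.hasDerivAt

theorem contDiff_primitive (hc : Continuous φ) : ContDiff ℝ 1 (primitive φ) := by
  rw [contDiff_one_iff_deriv]
  refine ⟨fun x => (hasDerivAt_primitive hc x).differentiableAt, ?_⟩
  simpa only [funext fun x => (hasDerivAt_primitive hc x).deriv] using hc

theorem average_eq_primitive (hc : Continuous φ) (s t : ℝ) :
    ⨍ u in s..t, φ u = (primitive φ t - primitive φ s) / (t - s) := by
  rw [interval_average_eq_div, primitive, primitive,
    intervalIntegral.integral_interval_sub_left (hc.intervalIntegrable _ _)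
      (hc.intervalIntegrable _ _)]

theorem average_lt_right (hc : Continuous φ) (hm : StrictMono φ) {s t : ℝ} (h : s < t) :
    ⨍ u in s..t, φ u < φ t := by
  rw [interval_average_eq_div, div_lt_iff₀ (sub_pos.2 h)]
  calc ∫ u in s..t, φ u < ∫ _ in s..t, φ t :=
        intervalIntegral.integral_lt_integral_of_continuousOn_of_le_of_exists_lt h
          hc.continuousOn continuousOn_const (fun u hu => hm.monotone hu.2)
          ⟨s, left_mem_Icc.2 h.le, hm h⟩
    _ = φ t * (t - s) := by simp [mul_comm]

theorem left_lt_average (hc : Continuous φ) (hm : StrictMono φ) {s t : ℝ} (h : s < t) :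
    φ s < ⨍ u in s..t, φ u := by
  rw [interval_average_eq_div, lt_div_iff₀ (sub_pos.2 h)]
  calc φ s * (t - s) = ∫ _ in s..t, φ s := by simp [mul_comm]
    _ < ∫ u in s..t, φ u :=
        intervalIntegral.integral_lt_integral_of_continuousOn_of_le_of_exists_lt h
          continuousOn_const hc.continuousOn (fun u hu => hm.monotone hu.1.le)
          ⟨t, right_mem_Icc.2 h.le, hm h⟩

theorem sub_mul_average (s t : ℝ) : (t - s) * ⨍ u in s..t, φ u = ∫ u in s..t, φ u := by
  rcases eq_or_ne t s with rfl | h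
  · simp
  rw [interval_average_eq, smul_eq_mul, ← mul_assoc, mul_inv_cancel₀ (sub_ne_zero.2 h), one_mul]

theorem sub_mul_average_add (hc : Continuous φ) (s m t : ℝ) :
    (m - s) * (⨍ u in s..m, φ u) + (t - m) * (⨍ u in m..t, φ u) =
      (t - s) * ⨍ u in s..t, φ u := by
  simp only [sub_mul_average]
  exact intervalIntegral.integral_add_adjacent_intervals (hc.intervalIntegrable s m)
    (hc.intervalIntegrable m t)

theorem average_midpoint (hc : Continuous φ) {s t : ℝ} (h : s < t) :
    ⨍ u in s..t, φ u = ((⨍ u in s..(s + t) / 2, φ u) + ⨍ u in (s + t) / 2..t, φ u) / 2 := by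
  have := sub_mul_average_add hc s ((s + t) / 2) t
  refine mul_left_cancel₀ (sub_pos.2 h).ne' ?_
  linear_combination -this

theorem average_lt_midpoint_add_right (hc : Continuous φ) (hm : StrictMono φ) {s t : ℝ}
    (h : s < t) : ⨍ u in s..t, φ u < (φ ((s + t) / 2) + φ t) / 2 := by
  rw [average_midpoint hc h]
  linarith [average_lt_right hc hm (by linarith : s < (s + t) / 2),
    average_lt_right hc hm (by linarith : (s + t) / 2 < t)]

theorem left_add_midpoint_lt_average (hc : Continuous φ) (hm : StrictMono φ) {s t : ℝ}
    (h : s < t) : (φ s + φ ((s + t) / 2)) / 2 < ⨍ u in s..t, φ u := by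
  rw [average_midpoint hc h]
  linarith [left_lt_average hc hm (by linarith : s < (s + t) / 2),
    left_lt_average hc hm (by linarith : (s + t) / 2 < t)]

theorem average_lt_average_of_lt_right (hc : Continuous φ) (hm : StrictMono φ) {s t t' : ℝ}
    (hst : s < t) (htt' : t < t') : ⨍ u in s..t, φ u < ⨍ u in s..t', φ u := by
  have hsplit := sub_mul_average_add hc s t t'
  have := (average_lt_right hc hm hst).trans (left_lt_average hc hm htt')
  nlinarith

theorem average_lt_average_of_lt_left (hc : Continuous φ) (hm : StrictMono φ) {s s' t : ℝ}
    (hss' : s < s') (hs't : s' < t) : ⨍ u in s..t, φ u < ⨍ u in s'..t, φ u := by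
  have hsplit := sub_mul_average_add hc s s' t
  have := (average_lt_right hc hm hss').trans (left_lt_average hc hm hs't)
  nlinarith

theorem average_lt_average (hc : Continuous φ) (hm : StrictMono φ) {s t s' t' : ℝ}
    (hs : s ≤ s') (ht : t ≤ t') (hst : s < t) (hs't' : s' < t') (hne : s < s' ∨ t < t') :
    ⨍ u in s..t, φ u < ⨍ u in s'..t', φ u := by
  rcases ht.lt_or_eq with ht | rfl
  · exact (average_lt_average_of_lt_right hc hm hst ht).trans_le <| hs.eq_or_lt.elim
      (fun h => h ▸ le_rfl) fun h => (average_lt_average_of_lt_left hc hm h hs't').le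
  · exact average_lt_average_of_lt_left hc hm (hne.resolve_right (lt_irrefl _)) hs't'

theorem _root_.ContinuousOn.intervalAverage {α : Type*} [TopologicalSpace α] {f g : α → ℝ}
    {U : Set α} (hc : Continuous φ) (hf : ContinuousOn f U) (hg : ContinuousOn g U)
    (hne : ∀ y ∈ U, f y ≠ g y) : ContinuousOn (fun y => ⨍ u in f y..g y, φ u) U := by
  have hG := (contDiff_primitive hc).continuous
  simp only [average_eq_primitive hc]
  exact ((hG.comp_continuousOn hg).sub (hG.comp_continuousOn hf)).div (hg.sub hf)
    fun y hy => sub_ne_zero.2 (hne y hy).symm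

theorem _root_.ContDiffOn.intervalAverage {E : Type*} [NormedAddCommGroup E] [NormedSpace ℝ E]
    {f g : E → ℝ} {U : Set E} (hc : Continuous φ) (hf : ContDiffOn ℝ 1 f U)
    (hg : ContDiffOn ℝ 1 g U) (hne : ∀ y ∈ U, f y ≠ g y) :
    ContDiffOn ℝ 1 (fun y => ⨍ u in f y..g y, φ u) U := by
  have hG := contDiff_primitive hc
  simp only [average_eq_primitive hc]
  exact ((hG.comp_contDiffOn hg).sub (hG.comp_contDiffOn hf)).div (hg.sub hf)
    fun y hy => sub_ne_zero.2 (hne y hy).symm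

theorem _root_.HasFDerivAt.intervalAverage {E : Type*} [NormedAddCommGroup E]
    [NormedSpace ℝ E] {f g : E → ℝ} {f' g' : E →L[ℝ] ℝ} {z : E} (hc : Continuous φ)
    (hf : HasFDerivAt f f' z) (hg : HasFDerivAt g g' z) (hne : f z ≠ g z) :
    HasFDerivAt (fun y => ⨍ u in f y..g y, φ u)
      ((g z - f z)⁻¹ • ((φ (g z) - ⨍ u in f z..g z, φ u) • g' -
        (φ (f z) - ⨍ u in f z..g z, φ u) • f')) z := by
  have hd : g z - f z ≠ 0 := sub_ne_zero.2 hne.symm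
  have hnum := ((hasDerivAt_primitive hc (g z)).comp_hasFDerivAt z hg).sub
    ((hasDerivAt_primitive hc (f z)).comp_hasFDerivAt z hf)
  have hinv := (hasDerivAt_inv hd).comp_hasFDerivAt z (hg.sub hf)
  simp only [average_eq_primitive hc, div_eq_mul_inv]
  refine (hnum.mul hinv).congr_fderiv ?_
  ext v
  simp only [Function.comp_apply, Pi.sub_apply, add_apply,
    FunLike.coe_smul, FunLike.coe_sub, Pi.smul_apply, smul_eq_mul]
  field_simp
  ring

theorem _root_.QuasiSym.sub_le_mul_sub (hqs : QuasiSym k φ) (hm : StrictMono φ) (hk : 0 < k)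
    (x : ℝ) {t : ℝ} (ht : 0 < t) :
    φ (x + t) - φ x ≤ k * (φ x - φ (x - t)) ∧ φ x - φ (x - t) ≤ k * (φ (x + t) - φ x) := by
  have hl : 0 < φ x - φ (x - t) := sub_pos.2 (hm (by linarith))
  obtain ⟨h₁, h₂⟩ := hqs x t ht
  rw [div_le_iff₀ hl] at h₂
  rw [div_le_div_iff₀ hk hl] at h₁
  constructor <;> linarith

theorem _root_.QuasiSym.sub_le_mul_sub_average (hqs : QuasiSym k φ) (hc : Continuous φ)
    (hm : StrictMono φ) (hk : 0 < k) {s t : ℝ} (h : s < t) :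
    φ t - φ s ≤ 2 * (k + 1) * (φ t - ⨍ u in s..t, φ u) ∧
      φ t - φ s ≤ 2 * (k + 1) * ((⨍ u in s..t, φ u) - φ s) := by
  have hqs' := hqs.sub_le_mul_sub hm hk ((s + t) / 2) (t := (t - s) / 2) (by linarith)
  rw [show (s + t) / 2 + (t - s) / 2 = t by ring, show (s + t) / 2 - (t - s) / 2 = s by ring]
    at hqs'
  have hup := average_lt_midpoint_add_right hc hm h
  have hlow := left_add_midpoint_lt_average hc hm h
  constructor <;> nlinarith [hqs'.1, hqs'.2]

theorem sq_sub_add_sq_sub_le {a b P Q : ℝ} (hk : 1 ≤ k) (ha : 0 < a) (hb : 0 < b)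
    (hab : a ≤ k * b) (hba : b ≤ k * a) (hP : a ≤ 2 * (k + 1) * P) (hPa : P ≤ a)
    (hQ : b ≤ 2 * (k + 1) * Q) (hQb : Q ≤ b) :
    (a - Q) ^ 2 + (b - P) ^ 2 ≤
      ((4 * k * (k + 1) - 1) / (4 * k * (k + 1) + 1)) ^ 2 * ((a + Q) ^ 2 + (b + P) ^ 2) := by
  set C := 4 * k * (k + 1)
  have hC8 : 8 ≤ C := by nlinarith
  have hP0 : 0 ≤ P := by nlinarith
  have hQ0 : 0 ≤ Q := by nlinarith
  have hmix : a * b ≤ (k + 1) * (a * Q + b * P) := by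
    nlinarith [mul_le_mul_of_nonneg_left hQ ha.le, mul_le_mul_of_nonneg_left hP hb.le]
  have hsum : a ^ 2 + b ^ 2 + P ^ 2 + Q ^ 2 ≤ C * (a * Q + b * P) := by
    nlinarith [mul_le_mul_of_nonneg_left hab ha.le, mul_le_mul_of_nonneg_left hba hb.le,
      mul_le_mul hPa hPa hP0 ha.le, mul_le_mul hQb hQb hQ0 hb.le]
  -- the two sums of squares differ by `4 (a Q + b P)` and add up to `2 (a² + b² + P² + Q²)`;
  -- the last step uses `(C - 2) / (C + 2) ≤ ((C - 1) / (C + 1)) ^ 2`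
  have hratio : (C + 2) * ((a - Q) ^ 2 + (b - P) ^ 2) ≤ (C - 2) * ((a + Q) ^ 2 + (b + P) ^ 2) := by
    nlinarith
  rw [div_pow, div_mul_eq_mul_div, le_div_iff₀ (by positivity)]
  nlinarith [sq_nonneg (a + Q), sq_nonneg (b + P), sq_nonneg (C + 1)]

theorem isOpen_upperHalf : IsOpen UpperHalf := isOpen_lt continuous_const continuous_im

def rightAverage (φ : ℝ → ℝ) (z : ℂ) : ℝ := ⨍ t in z.re..z.re + z.im, φ t

def leftAverage (φ : ℝ → ℝ) (z : ℂ) : ℝ := ⨍ t in z.re - z.im..z.re, φ t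

def extension (φ : ℝ → ℝ) (z : ℂ) : ℂ :=
  ((1 + I) * rightAverage φ z + (1 - I) * leftAverage φ z) / 2

theorem extension_re (φ : ℝ → ℝ) (z : ℂ) :
    (extension φ z).re = (rightAverage φ z + leftAverage φ z) / 2 := by
  simp [extension]

theorem extension_im (φ : ℝ → ℝ) (z : ℂ) :
    (extension φ z).im = (rightAverage φ z - leftAverage φ z) / 2 := by
  simp [extension, ← sub_eq_add_neg]

theorem rightAverage_eq (φ : ℝ → ℝ) (z : ℂ) :
    rightAverage φ z = (extension φ z).re + (extension φ z).im := by
  rw [extension_re, extension_im]; ring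

theorem leftAverage_eq (φ : ℝ → ℝ) (z : ℂ) :
    leftAverage φ z = (extension φ z).re - (extension φ z).im := by
  rw [extension_re, extension_im]; ring

theorem hasFDerivAt_rightAverage (hc : Continuous φ) (hz : z.im ≠ 0) :
    HasFDerivAt (rightAverage φ)
      (((φ (z.re + z.im) - φ z.re) / z.im) • reCLM +
        ((φ (z.re + z.im) - rightAverage φ z) / z.im) • imCLM) z := by
  have h := (reCLM.hasFDerivAt (x := z)).intervalAverage hc
    (reCLM.hasFDerivAt.add imCLM.hasFDerivAt) (by simp [hz])
  refine h.congr_fderiv (ContinuousLinearMap.ext fun w => ?_)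
  simp only [rightAverage, Pi.add_apply, add_sub_cancel_left, reCLM_apply, imCLM_apply,
    smul_apply, sub_apply, add_apply, smul_eq_mul]
  field_simp
  ring

theorem hasFDerivAt_leftAverage (hc : Continuous φ) (hz : z.im ≠ 0) :
    HasFDerivAt (leftAverage φ)
      (((φ z.re - φ (z.re - z.im)) / z.im) • reCLM +
        ((φ (z.re - z.im) - leftAverage φ z) / z.im) • imCLM) z := by
  have h := (reCLM.hasFDerivAt (x := z)).sub imCLM.hasFDerivAt |>.intervalAverage hc
    reCLM.hasFDerivAt (by simp [hz])
  refine h.congr_fderiv (ContinuousLinearMap.ext fun w => ?_)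
  simp only [leftAverage, Pi.sub_apply, sub_sub_cancel, reCLM_apply, imCLM_apply,
    smul_apply, sub_apply, add_apply, smul_eq_mul]
  field_simp
  ring

theorem fderivWithin_extension (hc : Continuous φ) (hz : z ∈ UpperHalf) :
    fderivWithin ℝ (extension φ) UpperHalf z 1 =
        ((1 + I) * ↑(φ (z.re + z.im) - φ z.re) + (1 - I) * ↑(φ z.re - φ (z.re - z.im))) /
          (2 * z.im) ∧
      fderivWithin ℝ (extension φ) UpperHalf z I =
        ((1 + I) * ↑(φ (z.re + z.im) - rightAverage φ z) +
          (1 - I) * ↑(φ (z.re - z.im) - leftAverage φ z)) / (2 * z.im) := by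
  have hα := ofRealCLM.hasFDerivAt.comp z (hasFDerivAt_rightAverage hc (ne_of_gt hz))
  have hβ := ofRealCLM.hasFDerivAt.comp z (hasFDerivAt_leftAverage hc (ne_of_gt hz))
  have hF : HasFDerivAt (extension φ) _ z :=
    ((hα.const_mul (1 + I)).add (hβ.const_mul (1 - I))).mul_const (2⁻¹ : ℂ)
      |>.congr_of_eventuallyEq <| .of_forall fun w => by simp only [extension, div_eq_mul_inv]; rfl
  rw [hF.hasFDerivWithinAt.fderivWithin (isOpen_upperHalf.uniqueDiffWithinAt hz)]
  constructor <;> simp [field]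

theorem wirtZ_wirtZbar_extension (hc : Continuous φ) (hz : z ∈ UpperHalf) :
    wirtZ (extension φ) z =
        ((1 + I) * ↑(φ (z.re + z.im) - φ z.re + (leftAverage φ z - φ (z.re - z.im))) +
          (1 - I) * ↑(φ z.re - φ (z.re - z.im) + (φ (z.re + z.im) - rightAverage φ z))) /
          (4 * z.im) ∧
      wirtZbar (extension φ) z =
        ((1 + I) * ↑(φ (z.re + z.im) - φ z.re - (leftAverage φ z - φ (z.re - z.im))) +
          (1 - I) * ↑(φ z.re - φ (z.re - z.im) - (φ (z.re + z.im) - rightAverage φ z))) /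
          (4 * z.im) := by
  obtain ⟨h1, hI⟩ := fderivWithin_extension hc hz
  have hy : (z.im : ℂ) ≠ 0 := ofReal_ne_zero.2 (ne_of_gt hz)
  rw [wirtZ, wirtZbar, h1, hI]
  constructor <;> field_simp <;> push_cast <;> ring_nf <;> simp only [I_sq] <;> ring

theorem norm_sq_one_add_I_mul_add (p q : ℝ) :
    ‖(1 + I) * (p : ℂ) + (1 - I) * q‖ ^ 2 = 2 * (p ^ 2 + q ^ 2) := by
  have : (1 + I) * (p : ℂ) + (1 - I) * q = ↑(p + q) + ↑(p - q) * I := by push_cast; ring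
  rw [this, Complex.sq_norm, normSq_add_mul_I]
  ring

theorem rightAverage_mem_Ioo (hc : Continuous φ) (hm : StrictMono φ) (hz : z ∈ UpperHalf) :
    rightAverage φ z ∈ Ioo (φ z.re) (φ (z.re + z.im)) :=
  have hz' : z.re < z.re + z.im := lt_add_of_pos_right _ hz
  ⟨left_lt_average hc hm hz', average_lt_right hc hm hz'⟩

theorem leftAverage_mem_Ioo (hc : Continuous φ) (hm : StrictMono φ) (hz : z ∈ UpperHalf) :
    leftAverage φ z ∈ Ioo (φ (z.re - z.im)) (φ z.re) :=
  have hz' : z.re - z.im < z.re := sub_lt_self _ hz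
  ⟨left_lt_average hc hm hz', average_lt_right hc hm hz'⟩

theorem norm_wirtZbar_extension_lt (hc : Continuous φ) (hm : StrictMono φ)
    (hz : z ∈ UpperHalf) : ‖wirtZbar (extension φ) z‖ < ‖wirtZ (extension φ) z‖ := by
  obtain ⟨hZ, hZbar⟩ := wirtZ_wirtZbar_extension hc hz
  have hy : (0 : ℝ) < ‖4 * (z.im : ℂ)‖ := by simpa using ne_of_gt hz
  obtain ⟨hα₁, hα₂⟩ := rightAverage_mem_Ioo hc hm hz
  obtain ⟨hβ₁, hβ₂⟩ := leftAverage_mem_Ioo hc hm hz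
  rw [hZ, hZbar, norm_div, norm_div]
  gcongr
  rw [← pow_lt_pow_iff_left₀ (norm_nonneg _) (norm_nonneg _) two_ne_zero,
    norm_sq_one_add_I_mul_add, norm_sq_one_add_I_mul_add]
  nlinarith [mul_pos (sub_pos.2 hα₂) (sub_pos.2 (hβ₂.trans hα₁)),
    mul_pos (sub_pos.2 hβ₁) (sub_pos.2 (hβ₂.trans hα₁))]

theorem norm_wirtZbar_extension_le (hc : Continuous φ) (hm : StrictMono φ)
    (hqs : QuasiSym k φ) (hk : 1 ≤ k) (hz : z ∈ UpperHalf) :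
    ‖wirtZbar (extension φ) z‖ ≤
      ((4 * k * (k + 1) - 1) / (4 * k * (k + 1) + 1)) * ‖wirtZ (extension φ) z‖ := by
  obtain ⟨hZ, hZbar⟩ := wirtZ_wirtZbar_extension hc hz
  have hz' : 0 < z.im := hz
  obtain ⟨hα₁, hα₂⟩ := rightAverage_mem_Ioo hc hm hz
  obtain ⟨hβ₁, hβ₂⟩ := leftAverage_mem_Ioo hc hm hz
  have hP : _ ≤ 2 * (k + 1) * (φ (z.re + z.im) - rightAverage φ z) :=
    (hqs.sub_le_mul_sub_average hc hm (by linarith) (lt_add_of_pos_right z.re hz')).1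
  have hQ : _ ≤ 2 * (k + 1) * (leftAverage φ z - φ (z.re - z.im)) :=
    (hqs.sub_le_mul_sub_average hc hm (by linarith) (sub_lt_self z.re hz')).2
  have hab := hqs.sub_le_mul_sub hm (by linarith) z.re hz'
  have hc₀ : 0 ≤ (4 * k * (k + 1) - 1) / (4 * k * (k + 1) + 1) :=
    div_nonneg (by nlinarith) (by nlinarith)
  rw [hZ, hZbar, norm_div, norm_div, mul_div_assoc']
  gcongr
  rw [← pow_le_pow_iff_left₀ (norm_nonneg _) (mul_nonneg hc₀ (norm_nonneg _)) two_ne_zero, mul_pow,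
    norm_sq_one_add_I_mul_add, norm_sq_one_add_I_mul_add]
  have := sq_sub_add_sq_sub_le hk (sub_pos.2 (hα₁.trans hα₂)) (sub_pos.2 (hβ₁.trans hβ₂))
    hab.1 hab.2 hP (by linarith) hQ (by linarith)
  linarith

theorem mapsTo_extension (hc : Continuous φ) (hm : StrictMono φ) :
    MapsTo (extension φ) UpperHalf UpperHalf := fun z hz => by
  change 0 < (extension φ z).im
  rw [extension_im]
  linarith [(rightAverage_mem_Ioo hc hm hz).1, (leftAverage_mem_Ioo hc hm hz).2]

theorem contDiffOn_extension (hc : Continuous φ) :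
    ContDiffOn ℝ 1 (extension φ) UpperHalf := by
  have hre : ContDiff ℝ 1 re := reCLM.contDiff
  have him : ContDiff ℝ 1 im := imCLM.contDiff
  have hα : ContDiffOn ℝ 1 (rightAverage φ) UpperHalf :=
    hre.contDiffOn.intervalAverage hc (hre.add him).contDiffOn fun w hw => by
      simpa using (ne_of_gt hw)
  have hβ : ContDiffOn ℝ 1 (leftAverage φ) UpperHalf :=
    (hre.sub him).contDiffOn.intervalAverage hc hre.contDiffOn fun w hw => by
      simpa using (ne_of_gt hw)
  exact (((ofRealCLM.contDiff.comp_contDiffOn hα).const_smul (1 + I)).add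
    ((ofRealCLM.contDiff.comp_contDiffOn hβ).const_smul (1 - I))).div_const 2

theorem injOn_extension (hc : Continuous φ) (hm : StrictMono φ) :
    InjOn (extension φ) UpperHalf := by
  intro z₁ h₁ z₂ h₂ heq
  have hα : rightAverage φ z₁ = rightAverage φ z₂ := by rw [rightAverage_eq, heq, rightAverage_eq]
  have hβ : leftAverage φ z₁ = leftAverage φ z₂ := by rw [leftAverage_eq, heq, leftAverage_eq]
  have h₁' : 0 < z₁.im := h₁
  have h₂' : 0 < z₂.im := h₂
  wlog hle : z₁.re ≤ z₂.re generalizing z₁ z₂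
  · exact (this h₂ h₁ heq.symm hα.symm hβ.symm h₂' h₁' (le_of_not_ge hle)).symm
  rcases le_or_gt (z₁.re + z₁.im) (z₂.re + z₂.im) with hR | hR
  · by_contra hne
    have hlt : z₁.re < z₂.re ∨ z₁.re + z₁.im < z₂.re + z₂.im := by
      by_contra! h
      exact hne (Complex.ext (by linarith) (by linarith))
    exact (average_lt_average hc hm hle hR (by linarith) (by linarith) hlt).ne hα
  · exact absurd hβ (average_lt_average hc hm (by linarith) hle (by linarith) (by linarith)
      (Or.inl (by linarith))).ne

theorem continuousOn_of_strictMono_of_apply_eq {f : ℝ → ℝ → ℝ} {X : ℝ → ℝ} {U : Set ℝ}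
    {A : ℝ} (hU : IsOpen U) (hmono : ∀ y ∈ U, StrictMono fun x => f x y)
    (hcont : ∀ x, ContinuousOn (f x) U) (hX : ∀ y ∈ U, f (X y) y = A) : ContinuousOn X U := by
  intro y₀ hy₀
  rw [ContinuousWithinAt, hU.nhdsWithin_eq hy₀, Metric.tendsto_nhds]
  intro ε hε
  have hlo : f (X y₀ - ε) y₀ < A := hX y₀ hy₀ ▸ hmono y₀ hy₀ (by linarith)
  have hhi : A < f (X y₀ + ε) y₀ := hX y₀ hy₀ ▸ hmono y₀ hy₀ (by linarith)
  filter_upwards [((hcont _).continuousAt (hU.mem_nhds hy₀)).eventually_lt_const hlo,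
    ((hcont _).continuousAt (hU.mem_nhds hy₀)).eventually_const_lt hhi, hU.mem_nhds hy₀]
    with y hlo hhi hy
  rw [← hX y hy] at hlo hhi
  rw [Real.dist_eq, abs_sub_lt_iff]
  constructor <;> linarith [(hmono y hy).lt_iff_lt.1 hlo, (hmono y hy).lt_iff_lt.1 hhi]

theorem exists_average_eq (hc : Continuous φ) (hm : StrictMono φ) (c : ℝ) {y : ℝ} (hy : 0 < y) :
    ∃ x ∈ Ioo (c - y) c, ⨍ u in x..x + y, φ u = φ c := by
  have hcont : ContinuousOn (fun x => ⨍ u in x..x + y, φ u) (Icc (c - y) c) :=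
    continuousOn_id.intervalAverage hc (continuousOn_id.add continuousOn_const) fun x _ => by
      simpa using hy.ne'
  refine intermediate_value_Ioo (by linarith) hcont ⟨?_, ?_⟩
  · simpa using average_lt_right hc hm (by linarith : c - y < c)
  · exact left_lt_average hc hm (by linarith)

theorem exists_continuousOn_average_eq (hc : Continuous φ) (hm : StrictMono φ) (c : ℝ) :
    ∃ X : ℝ → ℝ, ContinuousOn X (Ioi 0) ∧
      ∀ y ∈ Ioi (0 : ℝ), X y ∈ Ioo (c - y) c ∧ ⨍ u in X y..X y + y, φ u = φ c := by
  choose! X hX using fun y (hy : y ∈ Ioi (0 : ℝ)) => exists_average_eq hc hm c hy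
  refine ⟨X, continuousOn_of_strictMono_of_apply_eq (f := fun x y => ⨍ u in x..x + y, φ u)
    isOpen_Ioi ?_ ?_ fun y hy => (hX y hy).2, hX⟩
  · intro y hy x₁ x₂ hx
    exact average_lt_average hc hm hx.le (by linarith) (by simp [hy.out]) (by simp [hy.out])
      (Or.inl hx)
  · intro x
    exact continuousOn_const.intervalAverage hc (continuousOn_const.add continuousOn_id)
      fun y hy => by simpa using (ne_of_gt hy.out)

theorem exists_averages_eq (hc : Continuous φ) (hm : StrictMono φ)
    (hs : Function.Surjective φ) {A B : ℝ} (hBA : B < A) :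
    ∃ z ∈ UpperHalf, rightAverage φ z = A ∧ leftAverage φ z = B := by
  obtain ⟨c, rfl⟩ := hs A
  -- `φ` averages to `φ c` on `[X y, X y + y]`; the average on `[X y - y, X y]` is close to
  -- `φ c > B` for small `y` and tends to `-∞` as `y → ∞`, so it takes the value `B`
  obtain ⟨X, hXc, hX⟩ := exists_continuousOn_average_eq hc hm c
  set g := fun y => ⨍ u in X y - y..X y, φ u
  have hg : ContinuousOn g (Ioi 0) :=
    (hXc.sub continuousOn_id).intervalAverage hc hXc fun y hy => by simpa using ne_of_gt hy.out
  have hsmall : ∀ᶠ y in 𝓝[>] 0, B < g y := by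
    have hlim : Tendsto (fun y => φ (c - 2 * y)) (𝓝[>] 0) (𝓝 (φ c)) :=
      ((hc.comp (continuous_const.sub (continuous_const.mul continuous_id))).tendsto' 0 (φ c)
        (by simp)).mono_left nhdsWithin_le_nhds
    filter_upwards [hlim.eventually_const_lt hBA, self_mem_nhdsWithin] with y hy hy0
    have hXy := (hX y hy0).1.1
    exact hy.trans ((hm (by linarith)).trans (left_lt_average hc hm (by linarith [hy0.out])))
  have hlarge : ∀ᶠ y in atTop, g y < B := by
    have hbot : Tendsto φ atBot atBot :=
      hm.monotone.tendsto_atBot_atBot fun b => (hs b).imp fun _ h => h.le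
    have hlim : Tendsto (fun y => φ (c - y / 2)) atTop atBot :=
      hbot.comp (tendsto_atTop_atBot.2 fun b => ⟨2 * (c - b), fun y hy => by linarith⟩)
    filter_upwards [hlim.eventually_lt_atBot (2 * B - φ c), eventually_gt_atTop 0]
      with y hy hy0
    have hXy := (hX y hy0).1.2
    have hmid := average_lt_midpoint_add_right hc hm (by linarith : X y - y < X y)
    have h₁ : φ ((X y - y + X y) / 2) < φ (c - y / 2) := hm (by linarith)
    linarith [hm hXy]
  obtain ⟨y₁, hy₁, hy₁0⟩ := (hsmall.and self_mem_nhdsWithin).exists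
  obtain ⟨y₂, hy₂, hy₂0⟩ := (hlarge.and (eventually_gt_atTop 0)).exists
  obtain ⟨y, hy0, hgy⟩ := isPreconnected_Ioi.intermediate_value hy₂0 hy₁0 hg ⟨hy₂.le, hy₁.le⟩
  exact ⟨⟨X y, y⟩, hy0, (hX y hy0).2, hgy⟩

theorem surjOn_extension (hc : Continuous φ) (hm : StrictMono φ)
    (hs : Function.Surjective φ) : SurjOn (extension φ) UpperHalf UpperHalf := by
  intro w hw
  have hw' : 0 < w.im := hw
  obtain ⟨z, hz, hα, hβ⟩ := exists_averages_eq hc hm hs (A := w.re + w.im) (B := w.re - w.im)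
    (by linarith)
  exact ⟨z, hz, Complex.ext (by rw [extension_re, hα, hβ]; ring)
    (by rw [extension_im, hα, hβ]; ring)⟩

theorem tendsto_extension (hc : Continuous φ) (hm : StrictMono φ) (x : ℝ) :
    Tendsto (extension φ) (𝓝[UpperHalf] (x : ℂ)) (𝓝 (φ x : ℂ)) := by
  have hlo : Tendsto (fun z : ℂ => φ (z.re - z.im)) (𝓝[UpperHalf] (x : ℂ)) (𝓝 (φ x)) :=
    ((hc.comp (continuous_re.sub continuous_im)).tendsto' _ _ (by simp)).mono_left
      nhdsWithin_le_nhds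
  have hhi : Tendsto (fun z : ℂ => φ (z.re + z.im)) (𝓝[UpperHalf] (x : ℂ)) (𝓝 (φ x)) :=
    ((hc.comp (continuous_re.add continuous_im)).tendsto' _ _ (by simp)).mono_left
      nhdsWithin_le_nhds
  have hα : Tendsto (rightAverage φ) (𝓝[UpperHalf] (x : ℂ)) (𝓝 (φ x)) :=
    tendsto_of_tendsto_of_tendsto_of_le_of_le' hlo hhi
      (eventually_nhdsWithin_of_forall fun z hz =>
        ((hm (sub_lt_self _ hz)).trans (rightAverage_mem_Ioo hc hm hz).1).le)
      (eventually_nhdsWithin_of_forall fun z hz => (rightAverage_mem_Ioo hc hm hz).2.le)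
  have hβ : Tendsto (leftAverage φ) (𝓝[UpperHalf] (x : ℂ)) (𝓝 (φ x)) :=
    tendsto_of_tendsto_of_tendsto_of_le_of_le' hlo hhi
      (eventually_nhdsWithin_of_forall fun z hz => (leftAverage_mem_Ioo hc hm hz).1.le)
      (eventually_nhdsWithin_of_forall fun z hz =>
        ((leftAverage_mem_Ioo hc hm hz).2.trans (hm (lt_add_of_pos_right _ hz))).le)
  have hF := ((hα.ofReal.const_mul (1 + I)).add (hβ.ofReal.const_mul (1 - I))).div_const 2
  rwa [show ((1 + I) * (φ x : ℂ) + (1 - I) * φ x) / 2 = φ x by ring] at hF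

theorem tendsInfty_of_forall_le {F : ℂ → ℂ} {g : ℝ → ℝ} (hg : Tendsto g atTop atTop)
    (hF : ∀ z ∈ UpperHalf, g (|z.re| + z.im) ≤ ‖F z‖) : TendsInfty F := by
  intro R _
  obtain ⟨r, hr⟩ := eventually_atTop.1 (hg.eventually_ge_atTop R)
  refine ⟨max r 1, by positivity, fun z hz hzS => (hr _ ?_).trans (hF z hz)⟩
  have := norm_le_abs_re_add_abs_im z
  rw [abs_of_pos (show 0 < z.im from hz)] at this
  linarith [le_max_left r 1]

theorem abs_rightAverage_le (φ : ℝ → ℝ) (z : ℂ) : |rightAverage φ z| ≤ 2 * ‖extension φ z‖ := by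
  rw [rightAverage_eq]
  linarith [abs_add_le (extension φ z).re (extension φ z).im, abs_re_le_norm (extension φ z),
    abs_im_le_norm (extension φ z)]

theorem abs_leftAverage_le (φ : ℝ → ℝ) (z : ℂ) : |leftAverage φ z| ≤ 2 * ‖extension φ z‖ := by
  rw [leftAverage_eq]
  linarith [abs_sub (extension φ z).re (extension φ z).im, abs_re_le_norm (extension φ z),
    abs_im_le_norm (extension φ z)]

theorem min_le_norm_extension (hc : Continuous φ) (hm : StrictMono φ) (hz : z ∈ UpperHalf) :
    min (φ 0 + φ ((|z.re| + z.im) / 2)) (-(φ 0 + φ (-((|z.re| + z.im) / 2)))) ≤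
      4 * ‖extension φ z‖ := by
  have hz' : 0 < z.im := hz
  rcases le_or_gt 0 z.re with hx | hx
  · have hmid : _ < rightAverage φ z :=
      left_add_midpoint_lt_average hc hm (lt_add_of_pos_right z.re hz')
    have h₁ := hm.monotone hx
    have h₂ : φ ((|z.re| + z.im) / 2) ≤ φ ((z.re + (z.re + z.im)) / 2) :=
      hm.monotone (by rw [abs_of_nonneg hx]; linarith)
    have h₃ := (le_abs_self (rightAverage φ z)).trans (abs_rightAverage_le φ z)
    exact (min_le_left _ _).trans (by linarith)
  · have hmid : leftAverage φ z < _ :=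
      average_lt_midpoint_add_right hc hm (sub_lt_self z.re hz')
    have h₁ := hm.monotone hx.le
    have h₂ : φ ((z.re - z.im + z.re) / 2) ≤ φ (-((|z.re| + z.im) / 2)) :=
      hm.monotone (by rw [abs_of_neg hx]; linarith)
    have h₃ := (neg_le_abs (leftAverage φ z)).trans (abs_leftAverage_le φ z)
    exact (min_le_right _ _).trans (by linarith)

theorem tendsInfty_extension (hc : Continuous φ) (hm : StrictMono φ)
    (hs : Function.Surjective φ) : TendsInfty (extension φ) := by
  have htop : Tendsto φ atTop atTop :=
    hm.monotone.tendsto_atTop_atTop fun b => (hs b).imp fun _ h => h.ge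
  have hbot : Tendsto φ atBot atBot :=
    hm.monotone.tendsto_atBot_atBot fun b => (hs b).imp fun _ h => h.le
  have hhalf : Tendsto (fun r : ℝ => r / 2) atTop atTop := tendsto_id.atTop_div_const two_pos
  refine tendsInfty_of_forall_le
    (g := fun r => min (φ 0 + φ (r / 2)) (-(φ 0 + φ (-(r / 2)))) / 4) ?_
    fun z hz => by linarith [min_le_norm_extension hc hm hz]
  refine (tendsto_inf_atTop _ ?_ ?_).atTop_div_const (by norm_num)
  · exact tendsto_atTop_add_const_left _ _ (htop.comp hhalf)
  · exact tendsto_neg_atBot_atTop.comp (tendsto_atBot_add_const_left _ _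
      (hbot.comp (tendsto_neg_atTop_atBot.comp hhalf)))

theorem isQCDiffeo_extension (hc : Continuous φ) (hm : StrictMono φ)
    (hs : Function.Surjective φ) (hqs : QuasiSym k φ) (hk : 1 ≤ k) :
    IsQCDiffeo (4 * k * (k + 1)) (extension φ) :=
  ⟨mapsTo_extension hc hm, injOn_extension hc hm, surjOn_extension hc hm hs,
    contDiffOn_extension hc, fun _ hz => norm_wirtZbar_extension_lt hc hm hz,
    fun _ hz => norm_wirtZbar_extension_le hc hm hqs hk hz⟩

end BeurlingAhlfors

/-- Every `k`-quasi-symmetric strictly increasing homeomorphism of `ℝ` extends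
to a `K`-quasi-conformal orientation-preserving `C¹` diffeomorphism of the upper half-plane,
where `K` depends only on `k`. -/
theorem quasisymmetric_extends_to_qc :
    ∀ k : ℝ, 1 ≤ k → ∃ K : ℝ, 1 ≤ K ∧
      ∀ φ : ℝ → ℝ, IncrHomeo φ → QuasiSym k φ →
        ∃ F : ℂ → ℂ, IsQCDiffeo K F ∧
          (∀ x : ℝ, Tendsto F (nhdsWithin (x : ℂ) UpperHalf) (nhds ((φ x : ℝ) : ℂ))) ∧
          TendsInfty F := by
  intro k hk
  refine ⟨4 * k * (k + 1), by nlinarith, fun φ ⟨hm, hc, hs⟩ hqs => ?_⟩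
  exact ⟨BeurlingAhlfors.extension φ, BeurlingAhlfors.isQCDiffeo_extension hc hm hs hqs hk,
    BeurlingAhlfors.tendsto_extension hc hm, BeurlingAhlfors.tendsInfty_extension hc hm hs⟩
end
end

section
/- For every M ≥ 1 there exists k ≥ 1 such that: if φ : ℝ → ℝ is a strictly increasing homeomorphism with the property that for every quadruple (a,b,c,d) of pairwise distinct real numbers with cr(a,b,c,d) = −1 one has −M ≤ cr(φ(a), φ(b), φ(c), φ(d)) ≤ −1/M, then φ is k-quasi-symmetric. -/
open Complex Set Filter Topology

noncomputable section

/-!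
For `0 < u < t` the quadruple `(x - t, x, x + s, x + u)` with `s = 2ut / (t - u)` is symmetric,
and the bound `-M ≤ cr` on its image forces `φ (x + u) - φ x < M (φ x - φ (x - t))`. As `u → t`
we have `s → ∞`, and continuity of `φ` gives the upper quasi-symmetry inequality with `k = M`.
The lower one follows by applying this to `y ↦ -φ (-y)`, whose images of symmetric quadruples
have the same cross-ratios because `cr(-c, -d, -a, -b) = cr(a, b, c, d)`.
-/

def SymmetricQuadrupleBound (M : ℝ) (φ : ℝ → ℝ) : Prop :=
  ∀ a b c d : ℝ, a < b → b < d → d < c → crossRatio a b c d = -1 →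
    -M ≤ crossRatio (φ a) (φ b) (φ c) (φ d)

theorem crossRatio_neg_neg_neg_neg (a b c d : ℝ) :
    crossRatio (-c) (-d) (-a) (-b) = crossRatio a b c d := by
  unfold crossRatio
  ring

theorem exists_crossRatio_sub_add_eq_neg_one (x : ℝ) {t u : ℝ} (hu : 0 < u) (hut : u < t) :
    ∃ s, u < s ∧ crossRatio (x - t) x (x + s) (x + u) = -1 := by
  have ht : 0 < t := hu.trans hut
  have htu : 0 < t - u := sub_pos.2 hut
  have hus : u < 2 * u * t / (t - u) := by
    rw [lt_div_iff₀ htu]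
    nlinarith
  refine ⟨_, hus, ?_⟩
  have hden : (x - (x - t)) * (x + u - (x + 2 * u * t / (t - u))) ≠ 0 := by
    rw [add_sub_add_left_eq_sub, sub_sub_cancel]
    exact mul_ne_zero ht.ne' (by linarith)
  unfold crossRatio
  rw [div_eq_iff hden]
  field_simp
  ring

/-- Clearing denominators, `(w - p)(r - q) ≤ M (q - p)(w - r)`, and `w - p > w - r`. -/
theorem sub_lt_mul_sub_of_neg_le_crossRatio {M p q r w : ℝ} (hpq : p < q) (hqr : q < r)
    (hrw : r < w) (h : -M ≤ crossRatio p q w r) : r - q < M * (q - p) := by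
  have hden : (q - p) * (r - w) < 0 := mul_neg_of_pos_of_neg (by linarith) (by linarith)
  unfold crossRatio at h
  rw [le_div_iff_of_neg hden] at h
  nlinarith [mul_pos (sub_pos.2 hqr) (sub_pos.2 hpq), mul_pos (sub_pos.2 hqr) (sub_pos.2 hrw)]

namespace SymmetricQuadrupleBound

variable {M : ℝ} {φ : ℝ → ℝ}

theorem comp_neg_neg (h : SymmetricQuadrupleBound M φ) :
    SymmetricQuadrupleBound M (fun y => -φ (-y)) := by
  intro a b c d hab hbd hdc hcr
  rw [crossRatio_neg_neg_neg_neg]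
  refine h (-c) (-d) (-a) (-b) (by linarith) (by linarith) (by linarith) ?_
  rwa [crossRatio_neg_neg_neg_neg]

theorem right_increment_le (h : SymmetricQuadrupleBound M φ) (hφ : StrictMono φ)
    (hcont : Continuous φ) (x : ℝ) {t : ℝ} (ht : 0 < t) :
    φ (x + t) - φ x ≤ M * (φ x - φ (x - t)) := by
  have hlim : Tendsto (fun u => φ (x + u) - φ x) (𝓝[<] t) (𝓝 (φ (x + t) - φ x)) :=
    ((hcont.comp (continuous_const_add x)).sub continuous_const).continuousWithinAt
  refine le_of_tendsto hlim ?_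
  filter_upwards [Ioo_mem_nhdsLT ht] with u ⟨hu, hut⟩
  obtain ⟨s, hus, hcr⟩ := exists_crossRatio_sub_add_eq_neg_one x hu hut
  have hbound := h (x - t) x (x + s) (x + u) (by linarith) (by linarith) (by linarith) hcr
  exact (sub_lt_mul_sub_of_neg_le_crossRatio (hφ (by linarith)) (hφ (by linarith))
    (hφ (by linarith)) hbound).le

theorem left_increment_le (h : SymmetricQuadrupleBound M φ) (hφ : StrictMono φ)
    (hcont : Continuous φ) (x : ℝ) {t : ℝ} (ht : 0 < t) :
    φ x - φ (x - t) ≤ M * (φ (x + t) - φ x) := by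
  have hψ : StrictMono fun y => -φ (-y) := fun a b hab => neg_lt_neg (hφ (neg_lt_neg hab))
  have := h.comp_neg_neg.right_increment_le hψ (by fun_prop) (-x) ht
  simp only [neg_add, neg_neg, neg_sub', sub_neg_eq_add, ← sub_eq_add_neg] at this
  linarith

end SymmetricQuadrupleBound

theorem quasiSym_of_increment_le {M : ℝ} {φ : ℝ → ℝ} (hM : 0 < M) (hφ : StrictMono φ)
    (hright : ∀ x t, 0 < t → φ (x + t) - φ x ≤ M * (φ x - φ (x - t)))
    (hleft : ∀ x t, 0 < t → φ x - φ (x - t) ≤ M * (φ (x + t) - φ x)) :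
    QuasiSym M φ := by
  intro x t ht
  have hL : 0 < φ x - φ (x - t) := sub_pos.2 (hφ (by linarith))
  constructor
  · rw [div_le_div_iff₀ hM hL]
    linarith [hleft x t ht]
  · rw [div_le_iff₀ hL]
    exact hright x t ht

/-- Conversely, if a strictly increasing homeomorphism of `ℝ` sends every
symmetric quadruple (cross-ratio `−1`) to a quadruple of cross-ratio in `[−M, −1/M]`, then
it is `k`-quasi-symmetric with `k` depending only on `M`. -/
theorem crossratio_bound_implies_quasisymmetric (M : ℝ) (hM : 1 ≤ M) :
    ∃ k : ℝ, 1 ≤ k ∧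
      ∀ φ : ℝ → ℝ, IncrHomeo φ →
        (∀ a b c d : ℝ, a ≠ b → a ≠ c → a ≠ d → b ≠ c → b ≠ d → c ≠ d →
          crossRatio a b c d = -1 →
            -M ≤ crossRatio (φ a) (φ b) (φ c) (φ d) ∧
              crossRatio (φ a) (φ b) (φ c) (φ d) ≤ -(1 / M)) →
        QuasiSym k φ := by
  refine ⟨M, hM, fun φ ⟨hφ, hcont, _⟩ hbound => ?_⟩
  have h : SymmetricQuadrupleBound M φ := fun a b c d hab hbd hdc hsym =>
    (hbound a b c d hab.ne (by linarith) (by linarith) (by linarith) hbd.ne hdc.ne' hsym).1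
  exact quasiSym_of_increment_le (by linarith) hφ
    (fun x _ ht => h.right_increment_le hφ hcont x ht)
    (fun x _ ht => h.left_increment_le hφ hcont x ht)

end
end

section
/- Let Γ be a subgroup of SL(2,ℝ) acting cocompactly on ℍ, i.e. there exists a compact set F ⊆ ℍ with ⋃_{g ∈ Γ} g•F = ℍ. Let u : ℍ → ℝ be a smooth function which is Γ-invariant: u(g•z) = u(z) for all g ∈ Γ and z ∈ ℍ. Then for every p ≥ 1 there exists M_p > 0 such that (Im z)^p·‖Dᵖu(z)‖ ≤ M_p for all z ∈ ℍ; that is, all derivatives of u are bounded with respect to the hyperbolic metric. -/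
open Complex Set Filter Topology

noncomputable section

/-! Every point of `ℍ` is `g • w` with `g ∈ Γ` and `w` in the compact set `F`, and invariance
gives `u = u ∘ g⁻¹` on `ℍ`. By the Faà di Bruno bound, `Dᵖ(u ∘ g⁻¹)(z)` is controlled by the
derivatives of `u` at `w ∈ F`, bounded by compactness, and by those of the Möbius map `g⁻¹` at `z`.
Since `(d/dz)ⁱ (az+b)/(cz+d) = (-1)ⁱ⁻¹ i! cⁱ⁻¹ / (cz+d)ⁱ⁺¹` and `|cz+d| ≥ |c| Im z`, the latter
satisfy `‖Dⁱ(g⁻¹)(z)‖ ≤ i! Im w / (Im z)ⁱ`; as `Im w` is bounded on `F`, the factor `(Im z)ᵖ`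
absorbs the powers of `Im z` exactly. -/

open scoped MatrixGroups Nat

theorem norm_iteratedFDerivWithin_eq_norm_iteratedDeriv_of_isOpen
    {𝕜 𝕜' F : Type*} [NontriviallyNormedField 𝕜] [NontriviallyNormedField 𝕜']
    [NormedAlgebra 𝕜 𝕜'] [NormedAddCommGroup F] [NormedSpace 𝕜 F] [NormedSpace 𝕜' F]
    [IsScalarTower 𝕜 𝕜' F] {f : 𝕜' → F} {s : Set 𝕜'} {n : ℕ} {x : 𝕜'}
    (hs : IsOpen s) (hf : ContDiffOn 𝕜' n f s) (hx : x ∈ s) :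
    ‖iteratedFDerivWithin 𝕜 n f s x‖ = ‖iteratedDeriv n f x‖ := by
  have hrestrict :=
    (hf x hx).restrictScalars_iteratedFDerivWithin_eventuallyEq (hs.uniqueDiffOn (𝕜 := 𝕜)) hx
  rw [← hrestrict.eq_of_nhdsWithin hx, Function.comp_apply,
    ContinuousMultilinearMap.norm_restrictScalars,
    iteratedFDerivWithin_of_isOpen n hs hx, norm_iteratedFDeriv_eq_norm_iteratedDeriv]

theorem IsCompact.exists_pos_bound_iteratedFDerivWithin
    {𝕜 E F : Type*} [NontriviallyNormedField 𝕜] [NormedAddCommGroup E] [NormedSpace 𝕜 E]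
    [NormedAddCommGroup F] [NormedSpace 𝕜 F] {u : E → F} {s K : Set E} {N : WithTop ℕ∞}
    (hK : IsCompact K) (hKs : K ⊆ s) (hu : ContDiffOn 𝕜 N u s) (hs : UniqueDiffOn 𝕜 s)
    (p : ℕ) (hp : p ≤ N) :
    ∃ C > 0, ∀ i ≤ p, ∀ x ∈ K, ‖iteratedFDerivWithin 𝕜 i u s x‖ ≤ C := by
  have hbound : ∀ i ∈ {i | i ≤ p},
      ∀ᶠ C in atTop, ∀ x ∈ K, ‖iteratedFDerivWithin 𝕜 i u s x‖ ≤ C := by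
    intro i hi
    obtain ⟨C, hC⟩ := hK.exists_bound_of_continuousOn
      ((hu.continuousOn_iteratedFDerivWithin ((Nat.cast_le.2 hi).trans hp) hs).mono hKs)
    filter_upwards [eventually_ge_atTop C] with C' hC' x hx using (hC x hx).trans hC'
  obtain ⟨C, hC, hC0⟩ :=
    (((eventually_all_finite (Set.finite_le_nat p)).2 hbound).and (eventually_gt_atTop 0)).exists
  exact ⟨C, hC0, hC⟩

theorem iteratedDeriv_inv_affine_sq {𝕜 : Type*} [NontriviallyNormedField 𝕜] (c d : 𝕜) (j : ℕ)
    {z : 𝕜} (hz : c * z + d ≠ 0) :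
    iteratedDeriv j (fun w => (c * w + d)⁻¹ ^ 2) z
      = (-1) ^ j * (j + 1)! * c ^ j * (c * z + d)⁻¹ ^ (j + 2) := by
  induction j generalizing z with
  | zero => simp
  | succ j ih =>
    have hopen : IsOpen {w : 𝕜 | c * w + d ≠ 0} := isOpen_ne.preimage (by fun_prop)
    rw [iteratedDeriv_succ, (eventuallyEq_of_mem (hopen.mem_nhds hz) fun _ hw => ih hw).deriv_eq]
    have hlin : HasDerivAt (fun w => c * w + d) c z := by
      simpa using ((hasDerivAt_id z).const_mul c).add_const d
    have hpow : HasDerivAt (fun w => (c * w + d)⁻¹ ^ (j + 2))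
        ((j + 2 : ℕ) * (c * z + d)⁻¹ ^ (j + 1) * (-c / (c * z + d) ^ 2)) z :=
      (hlin.inv hz).pow (j + 2)
    rw [(hpow.const_mul ((-1) ^ j * ((j + 1)! : 𝕜) * c ^ j)).deriv, Nat.factorial_succ (j + 1)]
    push_cast
    simp only [div_eq_mul_inv, ← inv_pow]
    ring

theorem isOpen_upperHalf : IsOpen UpperHalf :=
  isOpen_lt continuous_const continuous_im

theorem Matrix.SpecialLinearGroup.det_fin_two_eq_one (g : SL(2, ℝ)) :
    g 0 0 * g 1 1 - g 0 1 * g 1 0 = 1 := by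
  rw [← Matrix.det_fin_two]
  exact g.det_coe

section Moebius

variable (g : SL(2, ℝ))

def moebiusDenom (z : ℂ) : ℂ := (g 1 0 : ℂ) * z + g 1 1

theorem moebiusDenom_ne_zero {z : ℂ} (hz : z ∈ UpperHalf) : moebiusDenom g z ≠ 0 := by
  intro h
  have hc : g 1 0 = 0 := by
    simpa [moebiusDenom, (show (0 : ℝ) < z.im from hz).ne'] using congrArg im h
  have hd : g 1 1 = 0 := by simpa [moebiusDenom, hc] using h
  simpa [hc, hd] using g.det_fin_two_eq_one

theorem im_moebius (z : ℂ) : (moebius g z).im = z.im / normSq (moebiusDenom g z) := by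
  rw [moebius, ← moebiusDenom, div_im, div_sub_div_same]
  congr 1
  simp only [moebiusDenom, add_im, add_re, mul_im, mul_re, ofReal_re, ofReal_im]
  linear_combination z.im * g.det_fin_two_eq_one

theorem abs_mul_im_le_norm_moebiusDenom (z : ℂ) : |g 1 0| * z.im ≤ ‖moebiusDenom g z‖ := by
  calc |g 1 0| * z.im ≤ |g 1 0| * |z.im| := by gcongr; exact le_abs_self _
    _ = |g 1 0 * z.im| := (abs_mul _ _).symm
    _ = |(moebiusDenom g z).im| := by simp [moebiusDenom]
    _ ≤ ‖moebiusDenom g z‖ := abs_im_le_norm _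

theorem moebius_mem_upperHalf {z : ℂ} (hz : z ∈ UpperHalf) : moebius g z ∈ UpperHalf := by
  show 0 < (moebius g z).im
  rw [im_moebius]
  exact div_pos hz (normSq_pos.2 (moebiusDenom_ne_zero g hz))

theorem moebius_coe_upperHalfPlane (z : UpperHalfPlane) : moebius g z = ↑(g • z) := by
  simp [moebius, UpperHalfPlane.coe_specialLinearGroup_apply]

theorem moebius_inv_moebius {z : ℂ} (hz : z ∈ UpperHalf) : moebius g⁻¹ (moebius g z) = z := by
  lift z to UpperHalfPlane using hz
  rw [moebius_coe_upperHalfPlane, moebius_coe_upperHalfPlane, inv_smul_smul]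

theorem hasDerivAt_moebius {z : ℂ} (hz : moebiusDenom g z ≠ 0) :
    HasDerivAt (moebius g) ((moebiusDenom g z)⁻¹ ^ 2) z := by
  have hlin : ∀ a b : ℂ, HasDerivAt (fun w => a * w + b) a z := fun a b => by
    simpa using ((hasDerivAt_id z).const_mul a).add_const b
  refine ((hlin _ _).div (hlin _ _) hz).congr_deriv ?_
  have hdet : (g 0 0 * g 1 1 - g 0 1 * g 1 0 : ℂ) = 1 := by exact_mod_cast g.det_fin_two_eq_one
  rw [moebiusDenom, inv_pow, ← one_div]
  congr 1
  linear_combination hdet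

theorem contDiffOn_moebius : ContDiffOn ℂ ⊤ (moebius g) UpperHalf :=
  ContDiffOn.div (by fun_prop) (by fun_prop) fun _ hz => moebiusDenom_ne_zero g hz

theorem iteratedDeriv_succ_moebius (j : ℕ) {z : ℂ} (hz : moebiusDenom g z ≠ 0) :
    iteratedDeriv (j + 1) (moebius g) z
      = (-1) ^ j * (j + 1)! * (g 1 0 : ℂ) ^ j * (moebiusDenom g z)⁻¹ ^ (j + 2) := by
  have hopen : IsOpen {w : ℂ | moebiusDenom g w ≠ 0} :=
    isOpen_ne.preimage (by unfold moebiusDenom; fun_prop)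
  rw [iteratedDeriv_succ', (eventuallyEq_of_mem (hopen.mem_nhds hz) fun w hw =>
    (hasDerivAt_moebius g hw).deriv).iteratedDeriv_eq]
  exact iteratedDeriv_inv_affine_sq _ _ j hz

theorem norm_iteratedFDerivWithin_moebius_le {i : ℕ} {z : ℂ} (hz : z ∈ UpperHalf) (hi : 1 ≤ i) :
    ‖iteratedFDerivWithin ℝ i (moebius g) UpperHalf z‖ ≤ i ! * (moebius g z).im / z.im ^ i := by
  obtain ⟨j, rfl⟩ := Nat.exists_eq_add_of_le' hi
  have hz' : 0 < z.im := hz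
  rw [norm_iteratedFDerivWithin_eq_norm_iteratedDeriv_of_isOpen isOpen_upperHalf
      ((contDiffOn_moebius g).of_le le_top) hz,
    iteratedDeriv_succ_moebius g j (moebiusDenom_ne_zero g hz), im_moebius, normSq_eq_norm_sq]
  have hr : 0 < ‖moebiusDenom g z‖ := norm_pos_iff.2 (moebiusDenom_ne_zero g hz)
  have hcr : (|g 1 0| * z.im) ^ j ≤ ‖moebiusDenom g z‖ ^ j :=
    pow_le_pow_left₀ (by positivity) (abs_mul_im_le_norm_moebiusDenom g z) j
  simp only [norm_mul, norm_pow, norm_neg, norm_one, one_pow, one_mul, norm_inv, norm_natCast,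
    norm_real, Real.norm_eq_abs]
  calc ((j + 1)! : ℝ) * |g 1 0| ^ j * ‖moebiusDenom g z‖⁻¹ ^ (j + 2)
      = (j + 1)! * (|g 1 0| * z.im) ^ j / (z.im ^ j * ‖moebiusDenom g z‖ ^ (j + 2)) := by
        rw [mul_pow, inv_pow]; field_simp
    _ ≤ (j + 1)! * ‖moebiusDenom g z‖ ^ j / (z.im ^ j * ‖moebiusDenom g z‖ ^ (j + 2)) := by gcongr
    _ = (j + 1)! * (z.im / ‖moebiusDenom g z‖ ^ 2) / z.im ^ (j + 1) := by field_simp; ring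

end Moebius

theorem im_pow_mul_norm_iteratedFDerivWithin_comp_moebius_le {E : Type*} [NormedAddCommGroup E]
    [NormedSpace ℝ E] (g : SL(2, ℝ)) {u : ℂ → E} {p : ℕ} (hu : ContDiffOn ℝ p u UpperHalf)
    {z : ℂ} (hz : z ∈ UpperHalf) {C T : ℝ}
    (hC : ∀ i ≤ p, ‖iteratedFDerivWithin ℝ i u UpperHalf (moebius g z)‖ ≤ C)
    (hT : (moebius g z).im ≤ T) :
    z.im ^ p * ‖iteratedFDerivWithin ℝ p (u ∘ moebius g) UpperHalf z‖
      ≤ p ! * C * (p ! * max 1 T) ^ p := by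
  have hz' : 0 < z.im := hz
  set B := p ! * max 1 T
  have hB : 1 ≤ B := one_le_mul_of_one_le_of_one_le (mod_cast p.factorial_pos) (le_max_left _ _)
  have hD : ∀ i, 1 ≤ i → i ≤ p →
      ‖iteratedFDerivWithin ℝ i (moebius g) UpperHalf z‖ ≤ (B / z.im) ^ i := by
    intro i hi hip
    have hw : 0 < (moebius g z).im := moebius_mem_upperHalf g hz
    calc ‖iteratedFDerivWithin ℝ i (moebius g) UpperHalf z‖
        ≤ i ! * (moebius g z).im / z.im ^ i := norm_iteratedFDerivWithin_moebius_le g hz hi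
      _ ≤ B / z.im ^ i := by
        gcongr
        exact mul_le_mul (mod_cast Nat.factorial_le hip) (hT.trans (le_max_right _ _)) hw.le
          (by positivity)
      _ ≤ B ^ i / z.im ^ i := by gcongr; exact le_self_pow₀ hB (by omega)
      _ = (B / z.im) ^ i := (div_pow _ _ _).symm
  have hcomp := norm_iteratedFDerivWithin_comp_le hu
    (((contDiffOn_moebius g).restrict_scalars ℝ).of_le le_top) le_rfl
    isOpen_upperHalf.uniqueDiffOn isOpen_upperHalf.uniqueDiffOn
    (fun _ hw => moebius_mem_upperHalf g hw) hz hC hD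
  calc z.im ^ p * ‖iteratedFDerivWithin ℝ p (u ∘ moebius g) UpperHalf z‖
      ≤ z.im ^ p * (p ! * C * (B / z.im) ^ p) := by gcongr
    _ = p ! * C * B ^ p := by rw [div_pow]; field_simp

/-- A smooth function on the upper half-plane which is invariant under a
cocompact subgroup of `SL(2,ℝ)` has all its derivatives bounded with respect to the
hyperbolic metric. -/
theorem invariant_function_has_bounded_derivatives
    (Γ : Subgroup (Matrix.SpecialLinearGroup (Fin 2) ℝ))
    (hcocompact : ∃ F : Set ℂ, F ⊆ UpperHalf ∧ IsCompact F ∧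
      ∀ z ∈ UpperHalf, ∃ g ∈ Γ, ∃ w ∈ F, moebius g w = z)
    (u : ℂ → ℝ) (hu : ContDiffOn ℝ (⊤ : ℕ∞) u UpperHalf)
    (hinv : ∀ g ∈ Γ, ∀ z ∈ UpperHalf, u (moebius g z) = u z) :
    ∀ p, 1 ≤ p → ∃ Mp : ℝ, 0 < Mp ∧ DerivBound u p Mp := by
  obtain ⟨F, hFH, hF, hcover⟩ := hcocompact
  intro p _
  obtain ⟨C, hC0, hC⟩ := hF.exists_pos_bound_iteratedFDerivWithin hFH hu
    isOpen_upperHalf.uniqueDiffOn p (mod_cast le_top)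
  obtain ⟨T, hT⟩ := (hF.image continuous_im).bddAbove
  refine ⟨p ! * C * (p ! * max 1 T) ^ p, by positivity, fun z hz => ?_⟩
  obtain ⟨g, hg, w, hwF, rfl⟩ := hcover z hz
  have hu_eq : EqOn u (u ∘ moebius g⁻¹) UpperHalf := fun y hy =>
    (hinv g⁻¹ (inv_mem hg) y hy).symm
  have hw : moebius g⁻¹ (moebius g w) = w := moebius_inv_moebius g (hFH hwF)
  rw [iteratedFDerivWithin_congr hu_eq hz]
  refine im_pow_mul_norm_iteratedFDerivWithin_comp_moebius_le g⁻¹ (hu.of_le (mod_cast le_top)) hz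
    (fun i hi => ?_) ?_ <;> rw [hw]
  · exact hC i hi w hwF
  · exact hT (mem_image_of_mem _ hwF)

end
end
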